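/- Let κ, μ be complex numbers with Re(μ + κ + 1/2) > 0 and Re(μ − κ + 1/2) > 0. Define for z > 0: F(z) = (√π · Γ(2μ+1)) / (2^μ · Γ((μ+κ+1/2)/2) · Γ((μ−κ+1/2)/2)) · √z · ∫₀¹ ξ^{(−κ+1/2)/2 − 1} (1−ξ)^{(κ+1/2)/2 − 1} e^{(ξ−1/2)z} J_μ(√(ξ(1−ξ)) · z) dξ. Then the limit as z → 0⁺ of z^{−(μ+1/2)} · F(z) equals 1; that is, F(z) ~ z^{μ+1/2} as z → 0⁺. -/

import Mathlib

/-!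
Write `J_μ(w) = (w/2)^μ · g_μ((w/2)²)` with `g_μ = besselEntire μ` entire and
`g_μ(0) = 1/Γ(μ+1)`. The factor `(√(ξ(1-ξ)) z / 2)^μ` splits into
`ξ^{μ/2} (1-ξ)^{μ/2} (z/2)^μ`, so the integrand becomes a Beta weight `ξ^{A-1}(1-ξ)^{B-1}`,
`A + B = μ + 1/2`, times a kernel continuous in `(z, ξ)`, while `z^{-(μ+1/2)} √z (z/2)^μ = 2^{-μ}`.
By dominated convergence the integral tends to `B(A, B)/Γ(μ+1) = Γ(A)Γ(B)/(Γ(μ+1/2)Γ(μ+1))`, and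
Legendre's duplication formula `Γ(μ+1/2)Γ(μ+1) = 2^{-2μ} √π Γ(2μ+1)` shows that the prefactor is
exactly its reciprocal.
-/

open scoped Real
open Complex Filter Set MeasureTheory Topology

noncomputable def besselJ (ν z : ℂ) : ℂ :=
  ∑' n : ℕ, ((-1 : ℂ) ^ n / (Complex.Gamma (ν + n + 1) * n.factorial)) * (z / 2) ^ (ν + 2 * n)

namespace Complex

lemma norm_inv_Gamma_add_one_le {s : ℂ} (hs : 1 ≤ s.re) :
    ‖(Gamma (s + 1))⁻¹‖ ≤ ‖(Gamma s)⁻¹‖ := by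
  have hs0 : s ≠ 0 := fun h => by simp [h] at hs; linarith
  rw [Gamma_add_one s hs0, mul_inv, norm_mul]
  refine mul_le_of_le_one_left (norm_nonneg _) ?_
  rw [norm_inv]
  exact inv_le_one_of_one_le₀ (hs.trans (re_le_norm s))

lemma norm_inv_Gamma_add_nat_le {μ : ℂ} (hμ : -1 < μ.re) (n : ℕ) :
    ‖(Gamma (μ + n + 1))⁻¹‖ ≤ ‖(Gamma (μ + 1))⁻¹‖ + ‖(Gamma (μ + 2))⁻¹‖ := by
  rcases n with _ | m
  · simp
  refine le_add_of_nonneg_of_le (norm_nonneg _) ?_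
  induction m with
  | zero => norm_num [one_add_one_eq_two, add_assoc]
  | succ k ih =>
    refine le_trans ?_ ih
    rw [show μ + ((k + 1 + 1 : ℕ) : ℂ) + 1 = μ + ((k + 1 : ℕ) : ℂ) + 1 + 1 by push_cast; ring]
    exact norm_inv_Gamma_add_one_le (by simp; linarith [k.cast_nonneg (α := ℝ)])

lemma Gamma_add_half_mul_Gamma_add_one (μ : ℂ) :
    Gamma (μ + 1 / 2) * Gamma (μ + 1) = Gamma (2 * μ + 1) * (2 : ℂ) ^ (-μ) * 2 ^ (-μ) * √π := by
  have := Gamma_mul_Gamma_add_half (μ + 1 / 2)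
  rw [show μ + 1 / 2 + 1 / 2 = μ + 1 by ring, show 2 * (μ + 1 / 2) = 2 * μ + 1 by ring,
    show 1 - (2 * μ + 1) = -μ + -μ by ring, cpow_add _ _ two_ne_zero] at this
  linear_combination this

lemma ofReal_sqrt_cpow {x : ℝ} (hx : 0 ≤ x) (s : ℂ) : ((√x : ℝ) : ℂ) ^ s = (x : ℂ) ^ (s / 2) := by
  rw [Real.sqrt_eq_rpow, ← cpow_mul_ofReal_nonneg hx]
  push_cast
  ring_nf

end Complex

noncomputable def besselEntire (μ t : ℂ) : ℂ :=
  ∑' n : ℕ, ((-1 : ℂ) ^ n / (Gamma (μ + n + 1) * n.factorial)) * t ^ n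

lemma norm_besselEntire_term_le {μ : ℂ} {C : ℝ} (hC : ∀ n : ℕ, ‖(Gamma (μ + n + 1))⁻¹‖ ≤ C)
    {R : ℝ} {t : ℂ} (ht : ‖t‖ ≤ R) (n : ℕ) :
    ‖((-1 : ℂ) ^ n / (Gamma (μ + n + 1) * n.factorial)) * t ^ n‖ ≤ C * (R ^ n / n.factorial) := by
  have hnorm : ‖((-1 : ℂ) ^ n / (Gamma (μ + n + 1) * n.factorial)) * t ^ n‖
      = ‖(Gamma (μ + n + 1))⁻¹‖ * (‖t‖ ^ n / n.factorial) := by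
    simp only [div_eq_mul_inv, mul_inv_rev, norm_mul, norm_pow, norm_neg, norm_one, one_pow,
      norm_inv, RCLike.norm_natCast, one_mul]
    ring
  rw [hnorm]
  gcongr
  · exact (norm_nonneg _).trans (hC 0)
  · exact hC n

lemma continuous_besselEntire {μ : ℂ} (hμ : -1 < μ.re) : Continuous (besselEntire μ) := by
  refine continuous_iff_continuousAt.2 fun x => ?_
  set R := ‖x‖ + 1
  refine ContinuousOn.continuousAt (s := Metric.closedBall 0 R) ?_
    (Metric.closedBall_mem_nhds_of_mem (by simp [R]))
  refine continuousOn_tsum (fun n => by fun_prop)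
    ((Real.summable_pow_div_factorial R).mul_left (‖(Gamma (μ + 1))⁻¹‖ + ‖(Gamma (μ + 2))⁻¹‖))
    fun n t ht => ?_
  exact norm_besselEntire_term_le (norm_inv_Gamma_add_nat_le hμ) (by simpa using ht) n

lemma besselEntire_zero (μ : ℂ) : besselEntire μ 0 = (Gamma (μ + 1))⁻¹ := by
  rw [besselEntire, tsum_eq_single 0 fun n hn => by simp [zero_pow hn]]
  simp

lemma besselJ_eq_cpow_mul_besselEntire (μ : ℂ) {w : ℂ} (hw : w ≠ 0) :
    besselJ μ w = (w / 2) ^ μ * besselEntire μ ((w / 2) ^ 2) := by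
  rw [besselJ, besselEntire, ← tsum_mul_left]
  refine tsum_congr fun n => ?_
  rw [cpow_add _ _ (div_ne_zero hw two_ne_zero),
    show 2 * (n : ℂ) = ((2 * n : ℕ) : ℂ) by push_cast; ring, cpow_natCast, pow_mul]
  ring

lemma continuous_intervalIntegral_mul_of_continuous {X : Type*} [TopologicalSpace X]
    [FirstCountableTopology X] [LocallyCompactSpace X] {f : ℝ → ℂ} {a b : ℝ}
    (hf : IntervalIntegrable f volume a b) {G : X → ℝ → ℂ} (hG : Continuous G.uncurry) :
    Continuous fun x => ∫ t in a..b, f t * G x t := by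
  refine continuous_iff_continuousAt.2 fun x₀ => ?_
  obtain ⟨U, hU, hUx₀⟩ := exists_compact_mem_nhds x₀
  obtain ⟨M, hM⟩ := (hU.prod isCompact_uIcc).exists_bound_of_continuousOn hG.continuousOn
  refine intervalIntegral.continuousAt_of_dominated_interval (bound := fun t => ‖f t‖ * M)
    (Eventually.of_forall fun x => ?_) ?_ (hf.norm.mul_const M) (ae_of_all _ fun t _ => ?_)
  · exact hf.def'.aestronglyMeasurable.mul
      (hG.comp (Continuous.prodMk_right x)).aestronglyMeasurable
  · filter_upwards [hUx₀] with x hx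
    refine ae_of_all _ fun t ht => ?_
    rw [norm_mul]
    exact mul_le_mul_of_nonneg_left (hM (x, t) ⟨hx, uIoc_subset_uIcc ht⟩) (norm_nonneg _)
  · exact (continuous_const.mul (hG.comp (Continuous.prodMk_left t))).continuousAt

noncomputable def whittakerKernel (μ : ℂ) (z ξ : ℝ) : ℂ :=
  exp ((ξ - 1 / 2) * z) * besselEntire μ (ξ * (1 - ξ) * z ^ 2 / 4)

lemma continuous_whittakerKernel {μ : ℂ} (hμ : -1 < μ.re) :
    Continuous (Function.uncurry (whittakerKernel μ)) := by
  have := continuous_besselEntire hμ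
  unfold whittakerKernel
  fun_prop

lemma whittakerKernel_zero (μ : ℂ) (ξ : ℝ) : whittakerKernel μ 0 ξ = (Gamma (μ + 1))⁻¹ := by
  simp [whittakerKernel, besselEntire_zero]

lemma whittaker_integrand_eq (μ p q : ℂ) {z ξ : ℝ} (hz : 0 < z) (hξ : ξ ∈ Ioo (0 : ℝ) 1) :
    (ξ : ℂ) ^ (p - 1) * ((1 : ℂ) - ξ) ^ (q - 1) * exp ((ξ - 1 / 2) * z) *
        besselJ μ ((√(ξ * (1 - ξ)) : ℝ) * z)
      = ((z / 2 : ℝ) : ℂ) ^ μ *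
        ((ξ : ℂ) ^ (p + μ / 2 - 1) * ((1 : ℂ) - ξ) ^ (q + μ / 2 - 1) * whittakerKernel μ z ξ) := by
  obtain ⟨hξ₀, hξ₁⟩ := hξ
  have h1ξ : 0 < 1 - ξ := sub_pos.2 hξ₁
  have hw : ((√(ξ * (1 - ξ)) : ℝ) : ℂ) * z ≠ 0 := by
    have := Real.sqrt_pos.2 (mul_pos hξ₀ h1ξ)
    exact mul_ne_zero (ofReal_ne_zero.2 this.ne') (ofReal_ne_zero.2 hz.ne')
  have hsq : ((((√(ξ * (1 - ξ)) : ℝ) : ℂ) * z) / 2) ^ 2 = ξ * (1 - ξ) * z ^ 2 / 4 := by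
    rw [div_pow, mul_pow, ← ofReal_pow, Real.sq_sqrt (mul_pos hξ₀ h1ξ).le]
    push_cast
    ring
  have hcpow : ((((√(ξ * (1 - ξ)) : ℝ) : ℂ) * z) / 2) ^ μ
      = (ξ : ℂ) ^ (μ / 2) * ((1 : ℂ) - ξ) ^ (μ / 2) * ((z / 2 : ℝ) : ℂ) ^ μ := by
    rw [show (((√(ξ * (1 - ξ)) : ℝ) : ℂ) * z) / 2
        = ((√ξ * √(1 - ξ) : ℝ) : ℂ) * ((z / 2 : ℝ) : ℂ) by
          rw [Real.sqrt_mul hξ₀.le]; push_cast; ring,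
      mul_cpow_ofReal_nonneg (by positivity) (by positivity), ofReal_mul,
      mul_cpow_ofReal_nonneg (by positivity) (by positivity),
      ofReal_sqrt_cpow hξ₀.le, ofReal_sqrt_cpow h1ξ.le]
    push_cast
    ring
  have hξC : (ξ : ℂ) ≠ 0 := ofReal_ne_zero.2 hξ₀.ne'
  have h1ξC : (1 : ℂ) - ξ ≠ 0 := by exact_mod_cast h1ξ.ne'
  rw [besselJ_eq_cpow_mul_besselEntire μ hw, hsq, hcpow, whittakerKernel,
    show p + μ / 2 - 1 = (p - 1) + μ / 2 by ring, show q + μ / 2 - 1 = (q - 1) + μ / 2 by ring,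
    cpow_add _ _ hξC, cpow_add _ _ h1ξC]
  ring

lemma cpow_neg_mul_sqrt_mul_half_cpow (μ : ℂ) {z : ℝ} (hz : 0 < z) :
    (z : ℂ) ^ (-(μ + 1 / 2)) * (((√z : ℝ) : ℂ) * ((z / 2 : ℝ) : ℂ) ^ μ) = (2 : ℂ) ^ (-μ) := by
  have hzC : (z : ℂ) ≠ 0 := ofReal_ne_zero.2 hz.ne'
  rw [← cpow_one ((√z : ℝ) : ℂ), ofReal_sqrt_cpow hz.le, ofReal_div,
    div_cpow_ofReal_nonneg hz.le zero_le_two, ofReal_ofNat, cpow_neg 2 μ, ← mul_div_assoc,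
    ← mul_div_assoc, ← cpow_add _ _ hzC, ← cpow_add _ _ hzC, div_eq_mul_inv]
  rw [show -(μ + 1 / 2) + (1 / 2 + μ) = 0 by ring, cpow_zero, one_mul]

lemma whittaker_normalization {μ A B : ℂ} (hA : 0 < A.re) (hB : 0 < B.re)
    (hAB : A + B = μ + 1 / 2) :
    √π * Gamma (2 * μ + 1) / (2 ^ μ * Gamma B * Gamma A) * 2 ^ (-μ) *
      (betaIntegral A B * (Gamma (μ + 1))⁻¹) = 1 := by
  have hΓA := Gamma_ne_zero_of_re_pos hA
  have hΓB := Gamma_ne_zero_of_re_pos hB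
  have hΓ₁ : Gamma (μ + 1 / 2) ≠ 0 := hAB ▸ Gamma_ne_zero_of_re_pos (add_pos hA hB)
  have hΓ₂ : Gamma (μ + 1) ≠ 0 := by
    refine Gamma_ne_zero_of_re_pos ?_
    rw [show μ + 1 = A + B + 1 / 2 by rw [hAB]; ring, add_re, add_re]
    linarith [show ((1 : ℂ) / 2).re = 1 / 2 by norm_num]
  have h2 : (2 : ℂ) ^ μ * 2 ^ (-μ) = 1 := by
    rw [← cpow_add _ _ two_ne_zero, add_neg_cancel, cpow_zero]
  rw [betaIntegral_eq_Gamma_mul_div A B hA hB, hAB]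
  have hdup := Gamma_add_half_mul_Gamma_add_one μ
  generalize Gamma (μ + 1 / 2) = g at hΓ₁ hdup ⊢
  field_simp
  linear_combination (-(2 : ℂ) ^ μ) * hdup - (Gamma (2 * μ + 1) * 2 ^ (-μ) * √π) * h2

lemma integral_whittaker_integrand_eq (κ μ : ℂ) {z : ℝ} (hz : 0 < z) :
    ∫ ξ in (0 : ℝ)..1, (ξ : ℂ) ^ ((-κ + 1 / 2) / 2 - 1) * ((1 : ℂ) - ξ) ^ ((κ + 1 / 2) / 2 - 1) *
        exp ((ξ - 1 / 2) * z) * besselJ μ ((√(ξ * (1 - ξ)) : ℝ) * z)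
      = ((z / 2 : ℝ) : ℂ) ^ μ * ∫ ξ in (0 : ℝ)..1, (ξ : ℂ) ^ ((μ - κ + 1 / 2) / 2 - 1) *
        ((1 : ℂ) - ξ) ^ ((μ + κ + 1 / 2) / 2 - 1) * whittakerKernel μ z ξ := by
  rw [← intervalIntegral.integral_const_mul, intervalIntegral.integral_of_le zero_le_one,
    intervalIntegral.integral_of_le zero_le_one, integral_Ioc_eq_integral_Ioo,
    integral_Ioc_eq_integral_Ioo]
  refine setIntegral_congr_fun measurableSet_Ioo fun ξ hξ => ?_
  rw [whittaker_integrand_eq μ _ _ hz hξ]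
  ring_nf

theorem whittaker_integral_boundary_condition (κ μ : ℂ)
    (h₁ : 0 < (μ + κ + 1 / 2).re) (h₂ : 0 < (μ - κ + 1 / 2).re) :
    Filter.Tendsto
      (fun z : ℝ => (z : ℂ) ^ (-(μ + 1 / 2)) *
        ((Real.sqrt π * Complex.Gamma (2 * μ + 1)) /
            ((2 : ℂ) ^ μ * Complex.Gamma ((μ + κ + 1 / 2) / 2) *
              Complex.Gamma ((μ - κ + 1 / 2) / 2)) *
          ((Real.sqrt z : ℂ) *
            ∫ ξ in (0:ℝ)..1,
              (ξ : ℂ) ^ ((-κ + 1 / 2) / 2 - 1) * ((1 : ℂ) - (ξ : ℂ)) ^ ((κ + 1 / 2) / 2 - 1) *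
                Complex.exp (((ξ : ℂ) - 1 / 2) * z) *
                besselJ μ ((Real.sqrt (ξ * (1 - ξ)) : ℂ) * z))))
      (nhdsWithin 0 (Set.Ioi 0)) (nhds 1) := by
  set A := (μ - κ + 1 / 2) / 2
  set B := (μ + κ + 1 / 2) / 2
  have hA : 0 < A.re := by simpa only [A, div_ofNat_re] using half_pos h₂
  have hB : 0 < B.re := by simpa only [B, div_ofNat_re] using half_pos h₁
  have hAB : A + B = μ + 1 / 2 := by simp only [A, B]; ring
  have hμ : -1 < μ.re := by
    have := add_pos hA hB
    rw [← add_re, hAB, add_re] at this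
    linarith [show ((1 : ℂ) / 2).re = 1 / 2 by norm_num]
  have hlim : Tendsto (fun z : ℝ => ∫ ξ in (0 : ℝ)..1,
      (ξ : ℂ) ^ (A - 1) * ((1 : ℂ) - ξ) ^ (B - 1) * whittakerKernel μ z ξ)
      (𝓝[>] 0) (𝓝 (betaIntegral A B * (Gamma (μ + 1))⁻¹)) := by
    have := (continuous_intervalIntegral_mul_of_continuous (betaIntegral_convergent hA hB)
      (continuous_whittakerKernel hμ)).tendsto 0
    rw [betaIntegral]
    simpa only [whittakerKernel_zero, intervalIntegral.integral_mul_const]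
      using this.mono_left nhdsWithin_le_nhds
  have hK := hlim.const_mul (√π * Gamma (2 * μ + 1) / (2 ^ μ * Gamma B * Gamma A) * 2 ^ (-μ))
  rw [whittaker_normalization hA hB hAB] at hK
  refine hK.congr' ?_
  filter_upwards [self_mem_nhdsWithin] with z hz
  rw [integral_whittaker_integrand_eq κ μ hz, ← cpow_neg_mul_sqrt_mul_half_cpow μ hz]
  ring
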